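/- If a consensus game G with seed (R, L_acc, L_rej) and reflection τ = R R⁻¹ is solvable, then over a subalphabet Σ ⊆ Γ, G covers the language (∩Σ*) τ* L_acc; and if additionally (∩Σ*)(τ* L_acc ∪ τ* L_rej) = Σ*, then G characterises (∩Σ*) τ* L_acc. -/

import Mathlib

/-! ## Consensus game acceptors (Berwanger–van den Bogaard).
A consensus game acceptor over an observation alphabet `Γ` is a finite graph
with an initial state, two observation labellings, and a nonempty set of
admissible decisions at each final (sink) state. -/
structure CGame (Γ : Type) where
  V : Type
  fintypeV : Fintype V
  E : V → V → Prop
  init : V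
  β1 : V → Γ
  β2 : V → Γ
  Ω : V → Set Bool
  Ω_ne : ∀ v, (∀ u, ¬ E v u) → (Ω v).Nonempty

namespace CGame

variable {Γ : Type} (G : CGame Γ)

/-- A final state has no outgoing transition. -/
def IsFinal (v : G.V) : Prop := ∀ u, ¬ G.E v u

/-- A play is a path `v₀ v₁ … v_{n+1}` from the initial state to a final state. -/
def IsPlay (π : List G.V) : Prop :=
  2 ≤ π.length ∧ π.head? = some G.init ∧ List.Chain' G.E π ∧
    ∀ v, π.getLast? = some v → G.IsFinal v

/-- Observation sequence of player 1 (interior states only). -/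
def obs1 (π : List G.V) : List Γ := ((π.drop 1).dropLast).map G.β1

/-- Observation sequence of player 2 (interior states only). -/
def obs2 (π : List G.V) : List Γ := ((π.drop 1).dropLast).map G.β2

/-- Admissible decisions `Ω(π)` at (the final state of) a play. -/
def OmegaP (π : List G.V) : Set Bool := {a | ∃ v, π.getLast? = some v ∧ a ∈ G.Ω v}

/-- Plays indistinguishable to player 1: `π ∼¹ π'`. -/
def Ind1 (π π' : List G.V) : Prop := G.IsPlay π ∧ G.IsPlay π' ∧ G.obs1 π = G.obs1 π'

/-- Plays indistinguishable to player 2: `π ∼² π'`. -/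
def Ind2 (π π' : List G.V) : Prop := G.IsPlay π ∧ G.IsPlay π' ∧ G.obs2 π = G.obs2 π'

/-- Connected plays: `π ∼* π'` (alternating chains of `∼¹` and `∼²`). -/
def Connected : List G.V → List G.V → Prop :=
  Relation.ReflTransGen (fun π π' => G.Ind1 π π' ∨ G.Ind2 π π')

/-- A (state-based) strategy of player 1: invariant under `∼¹`. -/
def Strategy1 (s : List G.V → Bool) : Prop := ∀ π π', G.Ind1 π π' → s π = s π'

/-- A (state-based) strategy of player 2: invariant under `∼²`. -/
def Strategy2 (s : List G.V → Bool) : Prop := ∀ π π', G.Ind2 π π' → s π = s π'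

/-- A joint strategy is winning if on every play the two decisions agree and
are admissible. -/
def JointWinning (s1 s2 : List G.V → Bool) : Prop :=
  G.Strategy1 s1 ∧ G.Strategy2 s2 ∧ ∀ π, G.IsPlay π → s1 π = s2 π ∧ s1 π ∈ G.OmegaP π

/-- A game is solvable if it admits a joint winning strategy. -/
def Solvable : Prop := ∃ s1 s2, G.JointWinning s1 s2

/-- An observation-based strategy `t : Γ* → Bool` of player 1 is winning if it is
the first component of a joint winning strategy. -/
def ObsWinning (t : List Γ → Bool) : Prop :=
  ∃ t2 : List Γ → Bool, G.JointWinning (fun π => t (G.obs1 π)) (fun π => t2 (G.obs2 π))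

/-- A decision `a` is safe at a play `π` if it is admissible at every connected play. -/
def Safe (a : Bool) (π : List G.V) : Prop :=
  ∀ π', G.IsPlay π' → G.Connected π π' → a ∈ G.OmegaP π'

/-- Seed relation: pairs of observation sequences of the two players on plays. -/
def seedRel : Set (List Γ × List Γ) :=
  {p | ∃ π, G.IsPlay π ∧ p.1 = G.obs1 π ∧ p.2 = G.obs2 π}

/-- Seed language `L_acc`: player-1 observations of plays with `Ω(π) = {1}`. -/
def LaccSet : Set (List Γ) := {w | ∃ π, G.IsPlay π ∧ G.obs1 π = w ∧ G.OmegaP π = {true}}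

/-- Seed language `L_rej`: player-1 observations of plays with `Ω(π) = {0}`. -/
def LrejSet : Set (List Γ) := {w | ∃ π, G.IsPlay π ∧ G.obs1 π = w ∧ G.OmegaP π = {false}}

end CGame

/-- Words over the subalphabet `S`. -/
def WordsIn {Γ : Type} (S : Set Γ) : Set (List Γ) := {w | ∀ a ∈ w, a ∈ S}

/-- `G` covers `L` over the terminal alphabet `S`: `G` is solvable, some winning
strategy defines exactly `L` on `S`-words, and every winning strategy accepts `L`. -/
def CGame.Covers {Γ : Type} (G : CGame Γ) (S : Set Γ) (L : Set (List Γ)) : Prop :=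
  G.Solvable ∧
  (∃ t, G.ObsWinning t ∧ ∀ w ∈ WordsIn S, (w ∈ L ↔ t w = true)) ∧
  (∀ t, G.ObsWinning t → ∀ w ∈ L, t w = true)

/-- `G` characterises `L` over `S`: solvable and every winning strategy defines `L`. -/
def CGame.Characterises {Γ : Type} (G : CGame Γ) (S : Set Γ) (L : Set (List Γ)) : Prop :=
  G.Solvable ∧ ∀ t, G.ObsWinning t → ∀ w ∈ WordsIn S, (w ∈ L ↔ t w = true)
/-! ## Operations on word relations. -/

/-- Composition of word relations. -/
def RelComp {α : Type} (S S' : Set (List α × List α)) : Set (List α × List α) :=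
  {p | ∃ z, (p.1, z) ∈ S ∧ (z, p.2) ∈ S'}

/-- Inverse of a word relation. -/
def RelInv {α : Type} (S : Set (List α × List α)) : Set (List α × List α) :=
  {p | (p.2, p.1) ∈ S}

/-- Reflexive-transitive iteration `S*` of a word relation. -/
def RelStar {α : Type} (S : Set (List α × List α)) : Set (List α × List α) :=
  {p | Relation.ReflTransGen (fun x y => (x, y) ∈ S) p.1 p.2}

/-- Image `S L = { x | (x,y) ∈ S for some y ∈ L }`. -/
def RelImage {α : Type} (S : Set (List α × List α)) (L : Set (List α)) : Set (List α) :=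
  {x | ∃ y, (x, y) ∈ S ∧ y ∈ L}

/-- Reflection `τ(R) := R R⁻¹`. -/
def Reflection {α : Type} (S : Set (List α × List α)) : Set (List α × List α) :=
  RelComp S (RelInv S)


/-!
A winning strategy must give the same answer on two player-1 observation sequences related by
the reflection `τ = R R⁻¹`: the first player's decision is shared, through the consensus
requirement, with the second player, who cannot tell the two plays apart. Hence every winning
strategy accepts `τ* L_acc` and rejects `τ* L_rej`. Conversely, accepting exactly `τ* L_acc`
wins: on a play whose observation lies in `τ* L_acc` some given winning strategy already
accepts, and elsewhere rejecting is admissible, since otherwise the observation would lie in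
`L_acc`. When `τ* L_acc ∪ τ* L_rej` contains every word over `S`, these two facts force the
answer of every winning strategy there.
-/

section RelStar

variable {α : Type} {S : Set (List α × List α)} {L P : Set (List α)}

theorem subset_relImage_relStar : L ⊆ RelImage (RelStar S) L :=
  fun y hy => ⟨y, Relation.ReflTransGen.refl, hy⟩

theorem mem_relImage_relStar_of_mem {x y : List α} (hxy : (x, y) ∈ S)
    (hy : y ∈ RelImage (RelStar S) L) : x ∈ RelImage (RelStar S) L := by
  obtain ⟨z, hyz, hz⟩ := hy
  exact ⟨z, Relation.ReflTransGen.head hxy hyz, hz⟩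

theorem relImage_relStar_subset (hL : L ⊆ P) (hS : ∀ x y, (x, y) ∈ S → y ∈ P → x ∈ P) :
    RelImage (RelStar S) L ⊆ P := by
  rintro x ⟨y, hxy, hy⟩
  change Relation.ReflTransGen (fun x y => (x, y) ∈ S) x y at hxy
  induction hxy using Relation.ReflTransGen.head_induction_on with
  | refl => exact hL hy
  | head hxz _ ih => exact hS _ _ hxz ih

end RelStar

namespace CGame

variable {Γ : Type} (G : CGame Γ)

theorem omegaP_nonempty {π : List G.V} (hπ : G.IsPlay π) : (G.OmegaP π).Nonempty := by
  obtain ⟨hlen, -, -, hfin⟩ := hπ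
  have hne : π ≠ [] := by rintro rfl; simp at hlen
  have hlast : π.getLast? = some (π.getLast hne) := List.getLast?_eq_some_getLast hne
  obtain ⟨a, ha⟩ := G.Ω_ne _ (hfin _ hlast)
  exact ⟨a, _, hlast, ha⟩

theorem omegaP_eq_singleton_true {π : List G.V} (hπ : G.IsPlay π) (hf : false ∉ G.OmegaP π) :
    G.OmegaP π = {true} := by
  obtain ⟨b, hb⟩ := G.omegaP_nonempty hπ
  cases b
  · exact absurd hb hf
  · ext a
    cases a <;> simp [hf, hb]

/-- `τ* L_acc` -/
def accClosure : Set (List Γ) := RelImage (RelStar (Reflection G.seedRel)) G.LaccSet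

theorem mem_accClosure_of_reflection {x y : List Γ} (hxy : (x, y) ∈ Reflection G.seedRel)
    (hy : y ∈ G.accClosure) : x ∈ G.accClosure :=
  mem_relImage_relStar_of_mem hxy hy

variable {G}

theorem JointWinning.eq_of_reflection {s1 s2 : List G.V → Bool} (hw : G.JointWinning s1 s2)
    {π π' : List G.V} (hπ : G.IsPlay π) (hπ' : G.IsPlay π')
    (hτ : (G.obs1 π, G.obs1 π') ∈ Reflection G.seedRel) : s1 π = s1 π' := by
  obtain ⟨_, ⟨πa, hπa, ha1, ha2⟩, πb, hπb, hb1, hb2⟩ := hτ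
  calc s1 π = s1 πa := hw.1 _ _ ⟨hπ, hπa, ha1⟩
    _ = s2 πa := (hw.2.2 _ hπa).1
    _ = s2 πb := hw.2.1 _ _ ⟨hπa, hπb, ha2.symm.trans hb2⟩
    _ = s1 πb := ((hw.2.2 _ hπb).1).symm
    _ = s1 π' := hw.1 _ _ ⟨hπb, hπ', hb1.symm⟩

theorem JointWinning.eq_true_of_mem_accClosure {s1 s2 : List G.V → Bool}
    (hw : G.JointWinning s1 s2) {π : List G.V} (hπ : G.IsPlay π)
    (hA : G.obs1 π ∈ G.accClosure) : s1 π = true := by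
  suffices G.accClosure ⊆ {w | ∀ π, G.IsPlay π → G.obs1 π = w → s1 π = true} from
    this hA π hπ rfl
  refine relImage_relStar_subset ?_ ?_
  · rintro _ ⟨π₀, hπ₀, rfl, hΩ⟩ π hπ hobs
    have h₀ := (hw.2.2 π₀ hπ₀).2
    rw [hΩ] at h₀
    exact (hw.1 _ _ ⟨hπ, hπ₀, hobs⟩).trans h₀
  · rintro x _ ⟨z, hxz, πb, hπb, rfl, hzb⟩ hy π hπ rfl
    rw [hw.eq_of_reflection hπ hπb ⟨z, hxz, πb, hπb, rfl, hzb⟩]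
    exact hy πb hπb rfl

theorem ObsWinning.eq_of_reflection {t : List Γ → Bool} (ht : G.ObsWinning t) {x y : List Γ}
    (hxy : (x, y) ∈ Reflection G.seedRel) : t x = t y := by
  obtain ⟨t2, hw⟩ := ht
  obtain ⟨z, ⟨πa, hπa, rfl, hza⟩, πb, hπb, rfl, hzb⟩ := hxy
  exact hw.eq_of_reflection hπa hπb ⟨z, ⟨πa, hπa, rfl, hza⟩, πb, hπb, rfl, hzb⟩

theorem ObsWinning.eq_of_mem_relImage {t : List Γ → Bool} (ht : G.ObsWinning t) {b : Bool}
    {w : List Γ} (hw : w ∈ RelImage (RelStar (Reflection G.seedRel))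
      {w | ∃ π, G.IsPlay π ∧ G.obs1 π = w ∧ G.OmegaP π = {b}}) : t w = b := by
  refine relImage_relStar_subset (P := {w | t w = b}) ?_ ?_ hw
  · rintro _ ⟨π, hπ, rfl, hΩ⟩
    obtain ⟨t2, hwin⟩ := ht
    have h := (hwin.2.2 π hπ).2
    rwa [hΩ] at h
  · intro x y hxy hy
    exact (ht.eq_of_reflection hxy).trans hy

variable (G)

open Classical in
noncomputable def accStrategy1 (w : List Γ) : Bool := decide (w ∈ G.accClosure)

open Classical in
noncomputable def accStrategy2 (y : List Γ) : Bool :=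
  decide (∃ π, G.IsPlay π ∧ G.obs2 π = y ∧ G.obs1 π ∈ G.accClosure)

theorem accStrategy1_eq_true_iff {w : List Γ} : G.accStrategy1 w = true ↔ w ∈ G.accClosure := by
  simp only [accStrategy1, decide_eq_true_eq]

theorem accStrategy2_eq_true_iff {y : List Γ} : G.accStrategy2 y = true ↔
    ∃ π, G.IsPlay π ∧ G.obs2 π = y ∧ G.obs1 π ∈ G.accClosure := by
  simp only [accStrategy2, decide_eq_true_eq]

theorem accStrategy1_eq_accStrategy2 {π : List G.V} (hπ : G.IsPlay π) :
    G.accStrategy1 (G.obs1 π) = G.accStrategy2 (G.obs2 π) := by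
  rw [Bool.eq_iff_iff, accStrategy1_eq_true_iff, accStrategy2_eq_true_iff]
  refine ⟨fun hA => ⟨π, hπ, rfl, hA⟩, ?_⟩
  rintro ⟨π', hπ', hobs, hA⟩
  exact G.mem_accClosure_of_reflection ⟨G.obs2 π, ⟨π, hπ, rfl, rfl⟩, π', hπ', rfl, hobs.symm⟩ hA

theorem accStrategy1_mem_omegaP {s1 s2 : List G.V → Bool} (hw : G.JointWinning s1 s2)
    {π : List G.V} (hπ : G.IsPlay π) : G.accStrategy1 (G.obs1 π) ∈ G.OmegaP π := by
  by_cases hA : G.obs1 π ∈ G.accClosure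
  · rw [(G.accStrategy1_eq_true_iff).2 hA, ← hw.eq_true_of_mem_accClosure hπ hA]
    exact (hw.2.2 π hπ).2
  · rw [Bool.eq_false_iff.2 (mt G.accStrategy1_eq_true_iff.1 hA)]
    by_contra hf
    exact hA (subset_relImage_relStar ⟨π, hπ, rfl, G.omegaP_eq_singleton_true hπ hf⟩)

theorem obsWinning_accStrategy1 (h : G.Solvable) : G.ObsWinning G.accStrategy1 := by
  obtain ⟨s1, s2, hw⟩ := h
  refine ⟨G.accStrategy2, fun π π' hind => ?_, fun π π' hind => ?_, fun π hπ => ?_⟩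
  · exact congrArg G.accStrategy1 hind.2.2
  · exact congrArg G.accStrategy2 hind.2.2
  · exact ⟨G.accStrategy1_eq_accStrategy2 hπ, G.accStrategy1_mem_omegaP hw hπ⟩

end CGame

/-- If a game `G` with reflection `τ = R R⁻¹` is solvable,
then over a subalphabet `S ⊆ Γ` it covers `(∩S*) τ* L_acc`; if moreover
`(∩S*)(τ* L_acc ∪ τ* L_rej) = S*`, then `G` characterises `(∩S*) τ* L_acc`. -/
theorem covers_iterated_image {Γ : Type} (G : CGame Γ) (S : Set Γ)
    (h : G.Solvable) :
    G.Covers S (WordsIn S ∩ RelImage (RelStar (Reflection G.seedRel)) G.LaccSet) ∧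
      (WordsIn S ∩
          (RelImage (RelStar (Reflection G.seedRel)) G.LaccSet ∪
           RelImage (RelStar (Reflection G.seedRel)) G.LrejSet) = WordsIn S →
        G.Characterises S
          (WordsIn S ∩ RelImage (RelStar (Reflection G.seedRel)) G.LaccSet)) := by
  refine ⟨⟨h, ⟨G.accStrategy1, G.obsWinning_accStrategy1 h, fun w hwS => ?_⟩,
    fun t ht w hw => ht.eq_of_mem_relImage hw.2⟩, fun hcover => ⟨h, fun t ht w hwS => ?_⟩⟩
  · exact ⟨fun hw => G.accStrategy1_eq_true_iff.2 hw.2,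
      fun hw => ⟨hwS, G.accStrategy1_eq_true_iff.1 hw⟩⟩
  · refine ⟨fun hw => ht.eq_of_mem_relImage hw.2, fun htw => ⟨hwS, ?_⟩⟩
    rw [← hcover] at hwS
    rcases hwS.2 with hacc | hrej
    · exact hacc
    · exact absurd (ht.eq_of_mem_relImage hrej) (by simp [htw])
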